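/- arXiv:1107.1871 — 5 statements merged into one kernel-verified Lean document; each statement's English description precedes it below -/
import Mathlib

section
/- For all positive integers d and r, the sum over the positive divisors i of r of the number of integers j with 1 ≤ j and j·d ≤ i and gcd(j, i) = 1 equals ⌊r/d⌋. -/
open Finset

/-!
Reducing `m / n` to lowest terms sends each `m ∈ [1, n]` to a fraction `j / i` with `i ∣ n` and
`j ∈ [1, i]` coprime to `i`, and `m ↦ j / i` is a bijection onto such fractions. Any condition
that depends only on the ratio `m / n`, here `m * d ≤ n`, is preserved, so the counts over the
divisors add up to `#{m ∈ [1, r] | m * d ≤ r} = ⌊r / d⌋`.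
-/

namespace Nat

variable {p : ℕ → ℕ → Prop} [DecidableRel p]

theorem card_filter_coprime_eq_card_filter_gcd_eq
    (hp : ∀ k j i, 0 < k → (p (k * j) (k * i) ↔ p j i)) {g x : ℕ} (hg : 0 < g) :
    #{j ∈ Icc 1 x | p j x ∧ j.Coprime x} =
      #{m ∈ Icc 1 (g * x) | p m (g * x) ∧ m.gcd (g * x) = g} := by
  apply card_bij fun j _ => g * j
  · simp only [mem_filter, mem_Icc, and_imp]
    intro j hj1 hjx hpj hcop
    refine ⟨⟨Nat.one_le_iff_ne_zero.mpr (by positivity), by gcongr⟩, (hp g j x hg).mpr hpj, ?_⟩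
    rw [gcd_mul_left, hcop.gcd_eq_one, mul_one]
  · intro _ _ _ _ h
    exact Nat.eq_of_mul_eq_mul_left hg h
  · simp only [mem_filter, mem_Icc, exists_prop, and_imp]
    intro m hm1 hmx hpm hgcd
    obtain ⟨q, rfl⟩ : g ∣ m := hgcd ▸ gcd_dvd_left m (g * x)
    rw [gcd_mul_left, mul_eq_left hg.ne'] at hgcd
    refine ⟨q, ⟨⟨Nat.pos_of_mul_pos_left hm1, le_of_mul_le_mul_left hmx hg⟩,
      (hp g q x hg).mp hpm, hgcd⟩, rfl⟩

theorem sum_divisors_card_filter_coprime_eq_card_filter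
    (hp : ∀ k j i, 0 < k → (p (k * j) (k * i) ↔ p j i)) (n : ℕ) :
    ∑ i ∈ n.divisors, #{j ∈ Icc 1 i | p j i ∧ j.Coprime i} = #{m ∈ Icc 1 n | p m n} := by
  rcases eq_or_ne n 0 with rfl | hn
  · simp
  rw [← sum_div_divisors n,
    card_eq_sum_card_fiberwise (f := fun m => m.gcd n) (t := n.divisors)
      fun m _ => mem_divisors.2 ⟨gcd_dvd_right m n, hn⟩]
  refine sum_congr rfl fun g hg => ?_
  have hgn := dvd_of_mem_divisors hg
  have hfiber := card_filter_coprime_eq_card_filter_gcd_eq hp (x := n / g)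
    (pos_of_dvd_of_pos hgn (pos_of_ne_zero hn))
  rw [Nat.mul_div_cancel' hgn] at hfiber
  rw [hfiber, filter_filter]

theorem filter_Icc_mul_le_eq_Icc_div {d : ℕ} (hd : 0 < d) (r : ℕ) :
    {m ∈ Icc 1 r | m * d ≤ r} = Icc 1 (r / d) := by
  ext m
  simp only [mem_filter, mem_Icc, le_div_iff_mul_le hd]
  exact ⟨fun h => ⟨h.1.1, h.2⟩, fun h => ⟨⟨h.1, le_of_mul_le_of_one_le_left h.2 hd⟩, h.2⟩⟩

end Nat

theorem sum_over_divisors_coprime_count_general (d r : ℕ) (hd : 0 < d) :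
    ∑ i ∈ r.divisors,
      ((Finset.Icc 1 i).filter fun j => j * d ≤ i ∧ Nat.gcd j i = 1).card = r / d := by
  have hom : ∀ k j i, 0 < k → (k * j * d ≤ k * i ↔ j * d ≤ i) := fun k j i hk => by
    rw [mul_assoc, Nat.mul_le_mul_left_iff hk]
  simp only [← Nat.coprime_iff_gcd_eq_one]
  rw [Nat.sum_divisors_card_filter_coprime_eq_card_filter hom, Nat.filter_Icc_mul_le_eq_Icc_div hd,
    Nat.card_Icc, Nat.add_sub_cancel]

/-- For all positive integers `d` and `r`, the sum over the positive divisors `i` of `r`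
of the number of integers `j` with `1 ≤ j`, `j·d ≤ i` and `gcd(j, i) = 1`
equals `⌊r/d⌋`. -/
theorem sum_over_divisors_coprime_count (d r : ℕ) (hd : 0 < d) (hr : 0 < r) :
    ∑ i ∈ r.divisors,
      ((Finset.Icc 1 i).filter fun j => j * d ≤ i ∧ Nat.gcd j i = 1).card = r / d :=
  sum_over_divisors_coprime_count_general d r hd
end

section
/- For integers d ≥ 2 and r ≥ 1, B_d(q^r − 1) = r + d·⌊r/d⌋ + d/2. -/
open Polynomial

/-- `φ_d(r)`: for `r = 1` it is `1/2`; for `r ≥ 2` it is the number of integers `j` with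
`1 ≤ j ≤ r / d` that are coprime to `r`. -/
noncomputable def phiD (d r : ℕ) : ℚ :=
  if r = 1 then 1 / 2
  else (((Finset.Icc 1 (r / d)).filter fun j => Nat.gcd j r = 1).card : ℚ)

/-- `B_d(f)` for `f` a rational constant times a power of `q` times a product of cyclotomic
polynomials: if `f = c·q^a·∏_{r≥1} Φ_r^{m_r}`, then `B_d(f) = 2a + Σ_r m_r·(φ(r) + d·φ_d(r))`.
The exponents are recovered as multiplicities; since `Φ_r ∣ f` forces
`φ(r) ≤ deg f` and `r ≤ 2·φ(r)²`, the sum below captures every relevant `r`. -/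
noncomputable def Bd (d : ℕ) (f : Polynomial ℚ) : ℚ :=
  2 * (multiplicity X f : ℚ) +
    ∑ r ∈ Finset.Icc 1 (2 * f.natDegree ^ 2 + 1),
      (multiplicity (cyclotomic r ℚ) f : ℚ) * ((Nat.totient r : ℚ) + d * phiD d r)

/-!
`X ^ r - 1` is prime to `X` and is the squarefree product of the `Φ_i` with `i ∣ r`, so
`B_d(X ^ r - 1) = ∑_{i ∣ r} (φ(i) + d·φ_d(i))`. Here `∑_{i ∣ r} φ(i) = r`, and sorting the
`k ∈ [1, r/d]` by `g = gcd(r, k)` and writing `k = g·j` shows that the `k` with a given `g` are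
counted by `φ_d(r/g)`; since `d ≥ 2`, `i = 1` only adds its conventional `1/2`, so
`∑_{i ∣ r} φ_d(i) = ⌊r/d⌋ + 1/2`.
-/

open Finset

lemma card_filter_gcd_eq_card_filter_coprime {d g r : ℕ} (hd : 0 < d) (hr : r ≠ 0) (hg : g ∣ r) :
    #{k ∈ Icc 1 (r / d) | r.gcd k = g} = #{j ∈ Icc 1 (r / g / d) | j.gcd (r / g) = 1} := by
  obtain ⟨x, rfl⟩ := hg
  have hg : 0 < g := Nat.pos_of_ne_zero (left_ne_zero_of_mul hr)
  have hle (j : ℕ) : g * j ≤ g * x / d ↔ j ≤ x / d := by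
    rw [Nat.le_div_iff_mul_le hd, Nat.le_div_iff_mul_le hd, mul_assoc, Nat.mul_le_mul_left_iff hg]
  rw [Nat.mul_div_cancel_left x hg]
  symm
  refine card_bij (fun j _ => g * j) ?_ (fun _ _ _ _ h => Nat.eq_of_mul_eq_mul_left hg h) ?_
  · simp only [mem_filter, mem_Icc, and_imp]
    intro j hj1 hjx hcop
    refine ⟨⟨Nat.one_le_iff_ne_zero.mpr (mul_ne_zero hg.ne' (by omega)), (hle j).mpr hjx⟩, ?_⟩
    rw [Nat.gcd_mul_left, Nat.gcd_comm, hcop, mul_one]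
  · simp only [mem_filter, mem_Icc, and_imp]
    intro k hk1 hkx hgcd
    obtain ⟨j, rfl⟩ : g ∣ k := hgcd ▸ Nat.gcd_dvd_right _ _
    rw [Nat.gcd_mul_left, mul_eq_left₀ hg.ne'] at hgcd
    exact ⟨j, ⟨⟨Nat.pos_of_mul_pos_left hk1, (hle j).mp hkx⟩, by rwa [Nat.gcd_comm]⟩, rfl⟩

lemma sum_divisors_card_filter_coprime {d : ℕ} (hd : 0 < d) (r : ℕ) :
    ∑ i ∈ r.divisors, #{j ∈ Icc 1 (i / d) | j.gcd i = 1} = r / d := by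
  rcases eq_or_ne r 0 with rfl | hr
  · simp
  have hfib : #(Icc 1 (r / d)) = ∑ g ∈ r.divisors, #{k ∈ Icc 1 (r / d) | r.gcd k = g} :=
    card_eq_sum_card_fiberwise fun k _ => Nat.mem_divisors.mpr ⟨Nat.gcd_dvd_left r k, hr⟩
  rw [Nat.card_Icc, add_tsub_cancel_right] at hfib
  rw [← Nat.sum_div_divisors, hfib]
  exact sum_congr rfl fun g hg =>
    (card_filter_gcd_eq_card_filter_coprime hd hr (Nat.dvd_of_mem_divisors hg)).symm

lemma cyclotomic_dvd_X_pow_sub_one_iff {i r : ℕ} (hi : 0 < i) (hr : r ≠ 0) :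
    cyclotomic i ℚ ∣ X ^ r - 1 ↔ i ∣ r := by
  refine ⟨fun h => ?_, fun h => ?_⟩
  · rw [← prod_cyclotomic_eq_X_pow_sub_one (Nat.pos_of_ne_zero hr)] at h
    obtain ⟨j, hj, hdvd⟩ := (cyclotomic.irreducible_rat hi).prime.exists_mem_finset_dvd h
    have hassoc := (cyclotomic.irreducible_rat hi).associated_of_dvd
      (cyclotomic.irreducible_rat (Nat.pos_of_mem_divisors hj)) hdvd
    rw [cyclotomic_injective (eq_of_monic_of_associated (cyclotomic.monic i ℚ)
      (cyclotomic.monic j ℚ) hassoc)]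
    exact Nat.dvd_of_mem_divisors hj
  · rw [← prod_cyclotomic_eq_X_pow_sub_one (Nat.pos_of_ne_zero hr)]
    exact dvd_prod_of_mem _ (Nat.mem_divisors.mpr ⟨h, hr⟩)

lemma multiplicity_cyclotomic_X_pow_sub_one {i r : ℕ} (hi : 0 < i) (hr : r ≠ 0) :
    multiplicity (cyclotomic i ℚ) (X ^ r - 1) = if i ∣ r then 1 else 0 := by
  split_ifs with hir
  · have hsf : Squarefree (X ^ r - 1 : ℚ[X]) :=
      (X_pow_sub_one_separable_iff.mpr (Nat.cast_ne_zero.mpr hr)).squarefree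
    have hnu := (cyclotomic.irreducible_rat hi).not_isUnit
    refine (FiniteMultiplicity.of_not_isUnit hnu hsf.ne_zero).multiplicity_eq_iff.mpr ⟨?_, ?_⟩
    · rwa [pow_one, cyclotomic_dvd_X_pow_sub_one_iff hi hr]
    · exact fun h => hnu (hsf _ (by rwa [← sq]))
  · rwa [multiplicity_eq_zero, cyclotomic_dvd_X_pow_sub_one_iff hi hr]

lemma multiplicity_X_X_pow_sub_one {R : Type*} [Ring R] [Nontrivial R] {r : ℕ} (hr : r ≠ 0) :
    multiplicity (X : R[X]) (X ^ r - 1) = 0 := by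
  simp [multiplicity_eq_zero, X_dvd_iff, hr.symm]

lemma Bd_X_pow_sub_one_eq_sum_divisors (d : ℕ) {r : ℕ} (hr : r ≠ 0) :
    Bd d (X ^ r - 1) = ∑ i ∈ r.divisors, ((i.totient : ℚ) + d * phiD d i) := by
  have hdeg : (X ^ r - 1 : ℚ[X]).natDegree = r := by
    rw [← C_1, natDegree_X_pow_sub_C]
  have hsub : r.divisors ⊆ Icc 1 (2 * r ^ 2 + 1) := fun i hi => by
    have := Nat.divisor_le hi
    rw [mem_Icc]
    exact ⟨Nat.pos_of_mem_divisors hi, by nlinarith⟩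
  rw [Bd, multiplicity_X_X_pow_sub_one hr, hdeg, Nat.cast_zero, mul_zero, zero_add]
  rw [← sum_subset hsub]
  · refine sum_congr rfl fun i hi => ?_
    rw [multiplicity_cyclotomic_X_pow_sub_one (Nat.pos_of_mem_divisors hi) hr,
      if_pos (Nat.dvd_of_mem_divisors hi), Nat.cast_one, one_mul]
  · intro i hi hi'
    rw [multiplicity_cyclotomic_X_pow_sub_one (mem_Icc.mp hi).1 hr,
      if_neg fun h => hi' (Nat.mem_divisors.mpr ⟨h, hr⟩), Nat.cast_zero, zero_mul]

lemma phiD_eq_card_add {d : ℕ} (hd : 1 < d) (i : ℕ) :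
    phiD d i = #{j ∈ Icc 1 (i / d) | j.gcd i = 1} + if i = 1 then 1 / 2 else 0 := by
  unfold phiD
  split_ifs with hi
  · simp [hi, Nat.div_eq_of_lt hd]
  · simp

lemma sum_divisors_phiD {d r : ℕ} (hd : 1 < d) (hr : r ≠ 0) :
    ∑ i ∈ r.divisors, phiD d i = (r / d : ℕ) + 1 / 2 := by
  simp only [phiD_eq_card_add hd, sum_add_distrib, ← Nat.cast_sum,
    sum_divisors_card_filter_coprime (zero_lt_one.trans hd), sum_ite_eq',
    Nat.one_mem_divisors.mpr hr, if_true]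

/-- For integers `d ≥ 2` and `r ≥ 1`, `B_d(q^r − 1) = r + d·⌊r/d⌋ + d/2`. -/
theorem Bd_X_pow_sub_one (d r : ℕ) (hd : 2 ≤ d) (hr : 1 ≤ r) :
    Bd d (X ^ r - 1) = (r : ℚ) + d * ((r / d : ℕ) : ℚ) + (d : ℚ) / 2 := by
  rw [Bd_X_pow_sub_one_eq_sum_divisors d (by omega), sum_add_distrib, ← mul_sum,
    sum_divisors_phiD hd (by omega), ← Nat.cast_sum, Nat.sum_totient]
  ring
end

section
/- Let d ≥ 2 be an integer, ζ = exp(2πi/d), and let r ≥ 1 be an integer with r ≠ d. Then Φ_r(ζ) ≠ 0 and the complex argument of Φ_r(ζ) is congruent to B_d(Φ_r)·π/d modulo 2π, where B_d(Φ_1) = 1 + d/2 and B_d(Φ_r) = φ(r) + d·φ_d(r) for r ≥ 2. -/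
open Polynomial

/-- `B_d(Φ_r)`: equal to `1 + d/2` for `r = 1` and to `φ(r) + d·φ_d(r)` for `r ≥ 2`. -/
noncomputable def BdCyc (d r : ℕ) : ℚ :=
  if r = 1 then 1 + (d : ℚ) / 2 else (Nat.totient r : ℚ) + d * phiD d r

/-!
Over `ℂ`, `Φ_r(ζ) = ∏ (ζ - e^{2πij/r})` over the `j < r` coprime to `r`. Writing `ζ = e^{ix}`
with `x = 2π/d`, each factor `e^{ix} - e^{iy} = 2 sin((x-y)/2) · e^{i((x+y)/2 + π/2)}` is a
positive multiple of `e^{i((x+y)/2 ± π/2)}`, with sign `+` exactly when `dj < r`; the case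
`dj = r` would force `j = 1` and `r = d`. So `Φ_r(ζ)` is a positive multiple of `e^{iT}` for an
explicit real sum `T`. Since the `j` coprime to `r ≥ 2` sum to `r φ(r) / 2` (pair `j` with
`r - j`), `T` is exactly `B_d(Φ_r) π / d`.
-/

open Finset
open scoped Real

namespace IsPrimitiveRoot

variable {K : Type*} [CommRing K] [IsDomain K] {ζ : K} {n : ℕ}

theorem primitiveRoots_eq_image [DecidableEq K] [NeZero n] (h : IsPrimitiveRoot ζ n) :
    primitiveRoots n K = {i ∈ range n | n.Coprime i}.image (ζ ^ ·) := by
  ext μ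
  simp [mem_primitiveRoots (NeZero.pos n), h.isPrimitiveRoot_iff, Nat.coprime_comm, and_assoc]

theorem eval_cyclotomic_eq_prod (h : IsPrimitiveRoot ζ n) (z : K) :
    (cyclotomic n K).eval z = ∏ i ∈ range n with n.Coprime i, (z - ζ ^ i) := by
  classical
  rcases eq_or_ne n 0 with rfl | hn
  · simp
  have : NeZero n := ⟨hn⟩
  rw [cyclotomic_eq_prod_X_sub_primitiveRoots h, eval_prod, h.primitiveRoots_eq_image,
    prod_image (h.injOn_pow.mono (filter_subset _ _))]
  simp

end IsPrimitiveRoot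

theorem Nat.sum_coprime_range_mul_two {n : ℕ} (hn : n ≠ 1) :
    (∑ j ∈ range n with n.Coprime j, j) * 2 = n * n.totient := by
  set J := {j ∈ range n | n.Coprime j}
  have hJ : ∀ j ∈ J, 0 < j ∧ j < n := by
    intro j hj
    simp only [J, mem_filter, mem_range] at hj
    refine ⟨Nat.pos_of_ne_zero ?_, hj.1⟩
    rintro rfl
    exact hn (Nat.coprime_zero_right n |>.1 hj.2)
  have hmem : ∀ j ∈ J, n - j ∈ J := by
    intro j hj
    have := hJ j hj
    simp only [J, mem_filter, mem_range] at hj ⊢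
    exact ⟨by omega, (Nat.coprime_self_sub_right this.2.le).2 hj.2⟩
  have hinv : ∀ j ∈ J, n - (n - j) = j := fun j hj => Nat.sub_sub_self (hJ j hj).2.le
  have hreflect : ∑ j ∈ J, j = ∑ j ∈ J, (n - j) :=
    sum_nbij' (n - ·) (n - ·) hmem hmem hinv hinv fun j hj => (hinv j hj).symm
  calc (∑ j ∈ J, j) * 2 = ∑ j ∈ J, (j + (n - j)) := by
        rw [sum_add_distrib, ← hreflect]; ring
    _ = n * n.totient := by
        rw [sum_congr rfl fun j hj => Nat.add_sub_of_le (hJ j hj).2.le, sum_const,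
          smul_eq_mul, mul_comm, Nat.totient_eq_card_coprime]

namespace Complex

theorem exp_mul_I_sub_exp_mul_I (x y : ℝ) :
    exp (x * I) - exp (y * I) =
      (2 * Real.sin ((x - y) / 2) : ℝ) * exp (((x + y) / 2 + π / 2 : ℝ) * I) := by
  have hcos := congrArg ofReal (Real.cos_sub_cos x y)
  have hsin := congrArg ofReal (Real.sin_sub_sin x y)
  rw [exp_mul_I, exp_mul_I, exp_mul_I]
  push_cast at hcos hsin ⊢
  rw [cos_add_pi_div_two, sin_add_pi_div_two]
  linear_combination hcos + hsin * I

theorem exists_exp_mul_I_sub_exp_mul_I_eq_of_lt {x y : ℝ} (h : y < x) (h' : x < y + 2 * π) :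
    ∃ c > (0 : ℝ), exp (x * I) - exp (y * I) = c * exp (((x + y) / 2 + π / 2 : ℝ) * I) :=
  ⟨_, mul_pos two_pos (Real.sin_pos_of_pos_of_lt_pi (by linarith) (by linarith)),
    exp_mul_I_sub_exp_mul_I x y⟩

theorem exists_exp_mul_I_sub_exp_mul_I_eq_of_gt {x y : ℝ} (h : x < y) (h' : y < x + 2 * π) :
    ∃ c > (0 : ℝ), exp (x * I) - exp (y * I) = c * exp (((x + y) / 2 - π / 2 : ℝ) * I) := by
  obtain ⟨c, hc, hyx⟩ := exists_exp_mul_I_sub_exp_mul_I_eq_of_lt h h'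
  refine ⟨c, hc, ?_⟩
  rw [← neg_sub, hyx, show ((x + y) / 2 - π / 2 : ℝ) = (y + x) / 2 + π / 2 - π by ring,
    ofReal_sub, sub_mul, exp_sub, exp_pi_mul_I]
  ring

theorem exists_prod_eq_mul_exp {ι : Type*} (s : Finset ι) (f : ι → ℂ) (θ : ι → ℝ)
    (h : ∀ i ∈ s, ∃ c > (0 : ℝ), f i = c * exp (θ i * I)) :
    ∃ c > (0 : ℝ), ∏ i ∈ s, f i = c * exp ((∑ i ∈ s, θ i : ℝ) * I) := by
  induction s using Finset.cons_induction with
  | empty => exact ⟨1, one_pos, by simp⟩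
  | cons a s ha ih =>
    obtain ⟨c, hc, hfa⟩ := h a (mem_cons_self a s)
    obtain ⟨c', hc', hfs⟩ := ih fun i hi => h i (mem_cons_of_mem hi)
    refine ⟨c * c', mul_pos hc hc', ?_⟩
    rw [prod_cons, sum_cons, hfa, hfs, ofReal_add, add_mul, exp_add, ofReal_mul]
    ring

theorem exists_arg_real_mul_exp_mul_I {c : ℝ} (hc : 0 < c) (θ : ℝ) :
    ∃ k : ℤ, arg (c * exp (θ * I)) = θ + 2 * π * k :=
  ⟨⌊(π - θ) / (2 * π)⌋, by
    rw [exp_mul_I]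
    linarith [arg_mul_cos_add_sin_mul_I_sub hc θ]⟩

theorem aeval_cyclotomic_eq_prod (r : ℕ) (z : ℂ) :
    aeval z (cyclotomic r ℚ) =
      ∏ j ∈ range r with r.Coprime j, (z - exp ((2 * π * j / r : ℝ) * I)) := by
  rcases eq_or_ne r 0 with rfl | hr
  · simp
  rw [aeval_def, eval₂_eq_eval_map, map_cyclotomic,
    (isPrimitiveRoot_exp r hr).eval_cyclotomic_eq_prod]
  refine prod_congr rfl fun j _ => ?_
  rw [← exp_nat_mul]
  push_cast
  ring_nf

end Complex

section

open Complex

theorem exists_exp_two_pi_I_div_sub_eq_mul_exp {d r j : ℕ} (hd : 2 ≤ d) (hj : j < r)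
    (hdj : d * j ≠ r) :
    ∃ c > (0 : ℝ), exp (2 * π * I / d) - exp ((2 * π * j / r : ℝ) * I) =
      c * exp ((π / d + π * j / r + if d * j < r then π / 2 else -(π / 2) : ℝ) * I) := by
  have hd' : (2 : ℝ) ≤ d := by exact_mod_cast hd
  have hr : (0 : ℝ) < r := by exact_mod_cast (j.zero_le.trans_lt hj)
  have hjr : (j : ℝ) < r := by exact_mod_cast hj
  have hζ : exp (2 * π * I / d) = exp ((2 * π / d : ℝ) * I) := by push_cast; ring_nf
  have hmid : (2 * π / d + 2 * π * j / r) / 2 = π / d + π * j / r := by ring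
  have hx : 2 * π / d ≤ π := by rw [div_le_iff₀ (by linarith)]; nlinarith [Real.pi_pos]
  have hy : 2 * π * j / r < 2 * π := by rw [div_lt_iff₀ hr]; nlinarith [Real.pi_pos]
  have hx0 : 0 < 2 * π / d := by positivity
  have hy0 : 0 ≤ 2 * π * j / r := by positivity
  have hlt_iff : 2 * π * j / r < 2 * π / d ↔ d * j < r := by
    rw [div_lt_div_iff₀ hr (by linarith), ← Nat.cast_lt (α := ℝ)]
    push_cast
    constructor <;> intro h <;> nlinarith [Real.pi_pos]
  have hgt_iff : 2 * π / d < 2 * π * j / r ↔ r < d * j := by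
    rw [div_lt_div_iff₀ (by linarith) hr, ← Nat.cast_lt (α := ℝ)]
    push_cast
    constructor <;> intro h <;> nlinarith [Real.pi_pos]
  rw [hζ]
  split_ifs with hlt
  · rw [← hmid]
    exact exists_exp_mul_I_sub_exp_mul_I_eq_of_lt (hlt_iff.2 hlt) (by linarith)
  · rw [← hmid, ← sub_eq_add_neg]
    exact exists_exp_mul_I_sub_exp_mul_I_eq_of_gt (hgt_iff.2 (by omega)) (by linarith)

theorem exists_aeval_cyclotomic_eq_mul_exp {d r : ℕ} (hd : 2 ≤ d) (hrd : r ≠ d) :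
    ∃ c > (0 : ℝ), aeval (exp (2 * π * I / d)) (cyclotomic r ℚ) =
      c * exp ((∑ j ∈ range r with r.Coprime j,
        (π / d + π * j / r + if d * j < r then π / 2 else -(π / 2)) : ℝ) * I) := by
  rw [aeval_cyclotomic_eq_prod]
  refine exists_prod_eq_mul_exp _ _ _ fun j hj => ?_
  rw [mem_filter, mem_range] at hj
  refine exists_exp_two_pi_I_div_sub_eq_mul_exp hd hj.1 fun hdj => hrd ?_
  subst hdj
  simp [Nat.Coprime.eq_one_of_dvd (Nat.coprime_comm.1 hj.2) (dvd_mul_left j d)]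

end

theorem filter_coprime_mul_lt_eq {d r : ℕ} (hd : d ≠ 0) (hr : r ≠ 1) (hrd : r ≠ d) :
    {j ∈ range r | r.Coprime j ∧ d * j < r} = {j ∈ Icc 1 (r / d) | j.gcd r = 1} := by
  ext j
  simp only [mem_filter, mem_range, mem_Icc, Nat.le_div_iff_mul_le (Nat.pos_of_ne_zero hd),
    mul_comm _ d]
  constructor
  · rintro ⟨-, hcop, hlt⟩
    have hj : j ≠ 0 := by
      rintro rfl
      exact hr (Nat.coprime_zero_right r |>.1 hcop)
    exact ⟨⟨Nat.one_le_iff_ne_zero.2 hj, hlt.le⟩, Nat.coprime_comm.1 hcop⟩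
  · rintro ⟨⟨hj, hle⟩, hcop⟩
    have hne : d * j ≠ r := by
      rintro rfl
      have : j = 1 := Nat.Coprime.eq_one_of_dvd (k := j) hcop (dvd_mul_left j d)
      exact hrd (by simp [this])
    have hlt : d * j < r := lt_of_le_of_ne hle hne
    exact ⟨lt_of_le_of_lt (Nat.le_mul_of_pos_left j (Nat.pos_of_ne_zero hd)) hlt,
      Nat.coprime_comm.1 hcop, hlt⟩

theorem BdCyc_mul_pi_div_eq_sum {d r : ℕ} (hd : d ≠ 0) (hr : r ≠ 0) (hrd : r ≠ d) :
    (BdCyc d r : ℝ) * π / d = ∑ j ∈ range r with r.Coprime j,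
      (π / d + π * j / r + if d * j < r then π / 2 else -(π / 2)) := by
  rcases eq_or_ne r 1 with rfl | hr1
  · simp [BdCyc]
    field_simp
  have hsplit := card_filter_add_card_filter_not (s := {j ∈ range r | r.Coprime j})
    (p := fun j => d * j < r)
  have hsum := Nat.sum_coprime_range_mul_two hr1
  rw [filter_filter, filter_coprime_mul_lt_eq hd hr1 hrd, ← Nat.totient_eq_card_coprime] at hsplit
  rw [sum_add_distrib, sum_add_distrib, sum_ite, sum_const, sum_const, sum_const, ← sum_div,
    ← mul_sum, ← Nat.totient_eq_card_coprime, filter_filter,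
    filter_coprime_mul_lt_eq hd hr1 hrd]
  simp only [BdCyc, phiD, if_neg hr1, nsmul_eq_mul]
  have hsplitR := congrArg (Nat.cast : ℕ → ℝ) hsplit
  have hsumR := congrArg (Nat.cast : ℕ → ℝ) hsum
  push_cast at hsplitR hsumR ⊢
  linear_combination (norm := skip) (π / 2) * hsplitR - π / (2 * r) * hsumR
  field_simp
  ring

/-- Let `d ≥ 2`, `ζ = exp(2πi/d)`, and let `r ≥ 1` be an integer with `r ≠ d`. Then
`Φ_r(ζ) ≠ 0` and the complex argument of `Φ_r(ζ)` is congruent to `B_d(Φ_r)·π/d`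
modulo `2π`. -/
theorem arg_cyclotomic_at_zeta (d r : ℕ) (hd : 2 ≤ d) (hr : 1 ≤ r) (hrd : r ≠ d) :
    aeval (Complex.exp (2 * Real.pi * Complex.I / d)) (cyclotomic r ℚ) ≠ 0 ∧
    ∃ k : ℤ,
      Complex.arg (aeval (Complex.exp (2 * Real.pi * Complex.I / d)) (cyclotomic r ℚ))
        = (BdCyc d r : ℝ) * Real.pi / d + 2 * Real.pi * k := by
  obtain ⟨c, hc, hΦ⟩ := exists_aeval_cyclotomic_eq_mul_exp hd hrd
  rw [hΦ, ← BdCyc_mul_pi_div_eq_sum (by omega) (by omega) hrd]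
  exact ⟨mul_ne_zero (Complex.ofReal_ne_zero.2 hc.ne') (Complex.exp_ne_zero _),
    Complex.exists_arg_real_mul_exp_mul_I hc _⟩
end

section
/- Let d ≥ 2 be an integer and ζ = exp(2πi/d). Let f ∈ ℚ[q] be a nonzero polynomial which is a product of a positive rational constant, a power of q, and cyclotomic polynomials, such that Φ_d does not divide f. Then f(ζ) ≠ 0 and the complex argument of f(ζ) is congruent to B_d(f)·π/d modulo 2π. -/
open Polynomial

/-- `f` is a product of a positive rational constant, a power of `q`, and
cyclotomic polynomials. -/
def IsPosCycProduct (f : Polynomial ℚ) : Prop :=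
  ∃ (c : ℚ) (a : ℕ) (L : Multiset ℕ), 0 < c ∧ (∀ r ∈ L, 0 < r) ∧
    f = C c * X ^ a * (L.map fun r => cyclotomic r ℚ).prod

/-!
Write `ζ = e^{2πi/d}`. For `r ≠ d`, `Φ_r(ζ)` is the product of `ζ - e^{2πij/r}` over `j < r` coprime
to `r`, and `e^{iα} - e^{iβ} = 2 sin((α - β)/2) · e^{i((α + β)/2 + π/2)}`. The sine is negative
exactly when `jd > r`, so `arg Φ_r(ζ) ≡ Σ_j (π/d + πj/r + π/2) + π · #{j : jd > r}`. As
`Σ_j j = rφ(r)/2` for `r ≥ 2`, this is `φ(r)π/d + φ(r)π + (φ(r) - φ_d(r))π ≡ (φ(r) + d φ_d(r))π/d`;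
for `r = 1` it is `π/d + π/2`. The constant `c > 0` contributes nothing and `q^a` contributes
`2aπ/d`. The exponents in `B_d(f)` are counts in the normalized factorization of `f`, and every
factor `Φ_r` is seen by the truncated sum defining `Bd`, since `r ≤ 2φ(r)² ≤ 2 (deg f)²`.
-/

open Finset Complex Real

theorem Nat.le_totient_sq_of_odd {r : ℕ} (hr : Odd r) : r ≤ r.totient ^ 2 := by
  induction r using Nat.recOnPosPrimePosCoprime with
  | zero => simp
  | one => simp
  | prime_pow p n hp hn =>
    obtain ⟨m, rfl⟩ := Nat.exists_eq_add_of_lt hn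
    have hp3 : 3 ≤ p := by
      have h2 := hp.two_le
      have : p ≠ 2 := by
        rintro rfl
        exact Nat.not_even_iff_odd.mpr hr (Nat.even_pow.mpr ⟨even_two, by omega⟩)
      omega
    have hpsq : p ≤ (p - 1) ^ 2 := by
      obtain ⟨q, rfl⟩ := Nat.exists_eq_add_of_le hp3
      simp only [show 3 + q - 1 = q + 2 by omega]
      nlinarith
    rw [zero_add, Nat.totient_prime_pow_succ hp, pow_succ, mul_pow]
    exact Nat.mul_le_mul (Nat.le_self_pow two_ne_zero _) hpsq
  | coprime a b _ _ hab iha ihb =>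
    obtain ⟨ha, hb⟩ := Nat.odd_mul.mp hr
    rw [Nat.totient_mul hab, mul_pow]
    exact Nat.mul_le_mul (iha ha) (ihb hb)

theorem Nat.le_two_mul_totient_sq (r : ℕ) : r ≤ 2 * r.totient ^ 2 := by
  rcases eq_or_ne r 0 with rfl | hr
  · simp
  obtain ⟨k, m, hm, rfl⟩ := Nat.exists_eq_two_pow_mul_odd hr
  have hm_le := Nat.le_totient_sq_of_odd hm
  rcases k with _ | k
  · simp only [pow_zero, one_mul]
    omega
  rw [Nat.totient_mul ((Nat.coprime_two_left.mpr hm).pow_left _),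
    Nat.totient_prime_pow_succ Nat.prime_two]
  calc 2 ^ (k + 1) * m = 2 * (2 ^ k * m) := by ring
    _ ≤ 2 * ((2 ^ k) ^ 2 * m.totient ^ 2) :=
      Nat.mul_le_mul_left 2 (Nat.mul_le_mul (Nat.le_self_pow two_ne_zero _) hm_le)
    _ = 2 * (2 ^ k * (2 - 1) * m.totient) ^ 2 := by ring

theorem Nat.two_mul_sum_coprime_range {r : ℕ} (hr : 1 < r) :
    2 * ∑ j ∈ range r with r.Coprime j, j = r * r.totient := by
  set T := {j ∈ range r | r.Coprime j}
  have hT : ∀ j ∈ T, 0 < j ∧ j < r := by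
    intro j hj
    obtain ⟨hjr, hj⟩ := mem_filter.mp hj
    refine ⟨Nat.pos_of_ne_zero ?_, mem_range.mp hjr⟩
    rintro rfl
    exact hr.ne' (Nat.coprime_zero_right _ |>.mp hj)
  have hrefl : ∀ j ∈ T, r - j ∈ T := by
    intro j hj
    obtain ⟨hj0, hjr⟩ := hT j hj
    simp only [T, mem_filter, mem_range, Nat.coprime_self_sub_right hjr.le]
    exact ⟨by omega, (mem_filter.mp hj).2⟩
  have hsum : ∑ j ∈ T, j = ∑ j ∈ T, (r - j) :=
    sum_nbij' (r - ·) (r - ·) hrefl hrefl (fun j hj => by have := hT j hj; omega)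
      (fun j hj => by have := hT j hj; omega) (fun j hj => by have := hT j hj; omega)
  calc 2 * ∑ j ∈ T, j = ∑ j ∈ T, (j + (r - j)) := by rw [sum_add_distrib, ← hsum]; ring
    _ = ∑ j ∈ T, r := sum_congr rfl fun j hj => by have := hT j hj; omega
    _ = r * r.totient := by rw [sum_const, smul_eq_mul, mul_comm, Nat.totient_eq_card_coprime]

theorem Complex.exp_mul_I_sub_exp_mul_I_s4 (s t : ℝ) :
    exp (s * I) - exp (t * I) =
      ↑(2 * Real.sin ((s - t) / 2)) * exp (↑((s + t) / 2 + π / 2) * I) := by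
  have hsub (u v : ℂ) :
      exp (v * I + u * I) - exp (v * I + -u * I) = 2 * Complex.sin u * (exp (v * I) * I) := by
    rw [exp_add, exp_add, Complex.sin]
    ring_nf
    rw [I_sq]
    ring
  have hI : exp (↑(π / 2) * I) = I := by simp [exp_mul_I]
  rw [ofReal_add, add_mul, exp_add, hI, ofReal_mul, ofReal_ofNat, ofReal_sin, ← hsub]
  congr 2 <;> push_cast <;> ring

theorem Complex.coe_arg_ofReal_mul_exp_mul_I {x : ℝ} (hx : x ≠ 0) (θ : ℝ) :
    (arg (x * exp (θ * I)) : Angle) = ↑(θ + if 0 < x then 0 else π) := by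
  have harg {y : ℝ} (hy : 0 < y) : (arg (y * exp (θ * I)) : Angle) = θ := by
    rw [arg_real_mul _ hy, arg_exp_mul_I, Real.Angle.coe_toIocMod]
  rcases hx.lt_or_gt with hneg | hpos
  · have hneg' : 0 < -x := neg_pos.mpr hneg
    have hx' : (x : ℂ) * exp (θ * I) = -(↑(-x) * exp (θ * I)) := by push_cast; ring
    rw [if_neg hneg.not_gt, Real.Angle.coe_add, hx',
      arg_neg_coe_angle (mul_ne_zero (ofReal_ne_zero.mpr hneg'.ne') (exp_ne_zero _)), harg hneg']
  · rw [if_pos hpos, add_zero, harg hpos]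

theorem Complex.coe_arg_prod {ι : Type*} {s : Finset ι} {g : ι → ℂ}
    (hg : ∀ i ∈ s, g i ≠ 0) :
    (arg (∏ i ∈ s, g i) : Angle) = ∑ i ∈ s, (arg (g i) : Angle) := by
  classical
  induction s using Finset.induction_on with
  | empty => simp
  | insert i s hi ih =>
    rw [prod_insert hi, sum_insert hi, arg_mul_coe_angle (hg i (mem_insert_self i s))
        (prod_ne_zero_iff.mpr fun j hj => hg j (mem_insert_of_mem hj)),
      ih fun j hj => hg j (mem_insert_of_mem hj)]

theorem Complex.eval_cyclotomic_eq_prod {r : ℕ} (hr : r ≠ 0) (z : ℂ) :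
    eval z (cyclotomic r ℂ) =
      ∏ j ∈ range r with r.Coprime j, (z - exp (2 * π * I * (j / r))) := by
  have hprim := isPrimitiveRoot_exp r hr
  have himg : primitiveRoots r ℂ = image (fun j : ℕ => exp (2 * π * I * (j / r)))
      {j ∈ range r | r.Coprime j} := by
    ext x
    simp only [mem_primitiveRoots (Nat.pos_of_ne_zero hr), isPrimitiveRoot_iff x r hr, mem_image,
      mem_filter, mem_range, and_assoc, Nat.coprime_comm, exists_prop]
  have hinj : Set.InjOn (fun j : ℕ => exp (2 * π * I * (j / r)))
      ({j ∈ range r | r.Coprime j} : Finset ℕ) := by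
    intro a ha b hb hab
    refine hprim.pow_inj (mem_range.mp (mem_filter.mp ha).1) (mem_range.mp (mem_filter.mp hb).1) ?_
    simp only [← exp_nat_mul] at hab ⊢
    convert hab using 2 <;> ring
  rw [cyclotomic_eq_prod_X_sub_primitiveRoots hprim, eval_prod, himg, prod_image hinj]
  simp

theorem Real.sin_ne_zero_and_pos_iff {x : ℝ} (h₁ : -π < x) (h₂ : x < π) (hx : x ≠ 0) :
    Real.sin x ≠ 0 ∧ (0 < Real.sin x ↔ 0 < x) := by
  refine ⟨fun h => hx ((Real.sin_eq_zero_iff_of_lt_of_lt h₁ h₂).mp h), ?_, ?_⟩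
  · intro hsin
    by_contra hneg
    exact (Real.sin_neg_of_neg_of_neg_pi_lt (lt_of_le_of_ne (not_lt.mp hneg) hx) h₁).not_gt hsin
  · exact fun hpos => Real.sin_pos_of_pos_of_lt_pi hpos h₂

theorem Complex.coe_arg_two_sin_mul_exp_mul_I {x : ℝ} (h₁ : -π < x) (h₂ : x < π)
    (hx : x ≠ 0) (θ : ℝ) : ↑(2 * Real.sin x) * exp (θ * I) ≠ 0 ∧
      (arg (↑(2 * Real.sin x) * exp (θ * I)) : Angle) = ↑(θ + if 0 < x then 0 else π) := by
  obtain ⟨hsin, hpos⟩ := Real.sin_ne_zero_and_pos_iff h₁ h₂ hx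
  have h2sin : 2 * Real.sin x ≠ 0 := mul_ne_zero two_ne_zero hsin
  refine ⟨mul_ne_zero (ofReal_ne_zero.mpr h2sin) (exp_ne_zero _), ?_⟩
  simp only [coe_arg_ofReal_mul_exp_mul_I h2sin, mul_pos_iff_of_pos_left (two_pos (α := ℝ)),
    hpos]

theorem Nat.mul_ne_of_coprime {r j d : ℕ} (hcop : r.Coprime j) (hrd : r ≠ d) : j * d ≠ r :=
  fun h => hrd (by rw [← h, Nat.Coprime.eq_one_of_dvd hcop.symm ⟨d, h.symm⟩, one_mul])

theorem coe_arg_exp_two_pi_I_div_sub {d r j : ℕ} (hd : 2 ≤ d) (hjr : j < r)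
    (hjd : j * d ≠ r) :
    exp (2 * π * I / d) - exp (2 * π * I * (j / r)) ≠ 0 ∧
    (arg (exp (2 * π * I / d) - exp (2 * π * I * (j / r))) : Angle) =
      ↑(π / d + π * j / r + π / 2 + if j * d < r then 0 else π) := by
  have hd' : (2 : ℝ) ≤ d := by exact_mod_cast hd
  have hr' : (0 : ℝ) < r := by exact_mod_cast j.zero_le.trans_lt hjr
  have hjr' : (j : ℝ) < r := by exact_mod_cast hjr
  have hx : π / d - π * j / r = π * (r - j * d) / (d * r) := by field_simp
  have hlow : -π < π / d - π * j / r := by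
    have : π * j / r < π := by rw [div_lt_iff₀ hr']; nlinarith [pi_pos]
    have : 0 < π / d := by positivity
    linarith
  have hhigh : π / d - π * j / r < π := by
    have : π / d ≤ π / 2 := div_le_div_of_nonneg_left pi_pos.le two_pos hd'
    have : 0 ≤ π * j / r := by positivity
    linarith [pi_pos]
  have hne : π / d - π * j / r ≠ 0 := by
    rw [hx]
    refine div_ne_zero (mul_ne_zero pi_ne_zero (sub_ne_zero.mpr ?_)) (by positivity)
    exact_mod_cast hjd.symm
  have hpos : 0 < π / d - π * j / r ↔ j * d < r := by
    rw [hx, div_pos_iff_of_pos_right (by positivity), mul_pos_iff_of_pos_left pi_pos, sub_pos]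
    exact_mod_cast Iff.rfl
  have hdiff : exp (2 * π * I / d) - exp (2 * π * I * (j / r)) =
      ↑(2 * Real.sin (π / d - π * j / r)) * exp (↑(π / d + π * j / r + π / 2) * I) := by
    have hs : exp (2 * π * I / d) = exp (↑(2 * π / d) * I) := by push_cast; ring_nf
    have ht : exp (2 * π * I * (j / r)) = exp (↑(2 * π * j / r) * I) := by push_cast; ring_nf
    rw [hs, ht, exp_mul_I_sub_exp_mul_I_s4]
    congr 4 <;> ring
  rw [hdiff, ← if_congr hpos rfl rfl]
  exact coe_arg_two_sin_mul_exp_mul_I hlow hhigh hne _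

theorem phiD_eq_card_filter {d r : ℕ} (hd : 0 < d) (hr : 1 < r) (hrd : r ≠ d) :
    phiD d r = #{j ∈ range r | r.Coprime j ∧ j * d < r} := by
  rw [phiD, if_neg hr.ne']
  congr 2
  ext j
  simp only [mem_filter, mem_Icc, mem_range, Nat.le_div_iff_mul_le hd]
  constructor
  · rintro ⟨⟨hj, hjd⟩, hcop⟩
    have hne := Nat.mul_ne_of_coprime (Nat.Coprime.symm hcop) hrd
    have := Nat.le_mul_of_pos_right j hd
    exact ⟨by omega, Nat.Coprime.symm hcop, by omega⟩
  · rintro ⟨hjr, hcop, hjd⟩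
    refine ⟨⟨Nat.pos_of_ne_zero ?_, hjd.le⟩, Nat.Coprime.symm hcop⟩
    rintro rfl
    exact hr.ne' (Nat.coprime_zero_right r |>.mp hcop)

theorem coe_sum_root_angles {d r : ℕ} (hd : 2 ≤ d) (hr : 0 < r) (hrd : r ≠ d) :
    (↑(∑ j ∈ range r with r.Coprime j,
        (π / d + π * j / r + π / 2 + if j * d < r then 0 else π)) : Angle) =
      ↑(((r.totient + d * phiD d r : ℚ) : ℝ) * π / d) := by
  have hd' : (d : ℝ) ≠ 0 := by positivity
  obtain rfl | hr1 : r = 1 ∨ 1 < r := by omega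
  · have hT : ({j ∈ range 1 | (1 : ℕ).Coprime j} : Finset ℕ) = {0} := by decide
    rw [hT, sum_singleton, zero_mul, if_pos Nat.one_pos, phiD, if_pos rfl, Nat.totient_one]
    congr 1
    push_cast
    field_simp
    ring
  set T := {j ∈ range r | r.Coprime j}
  set N := #{j ∈ T | ¬ j * d < r}
  have hPN : phiD d r + N = r.totient := by
    rw [phiD_eq_card_filter (by omega) hr1 hrd, Nat.totient_eq_card_coprime,
      ← card_filter_add_card_filter_not (s := T) (fun j => j * d < r), filter_filter]
    push_cast; rfl
  have hgauss : (∑ j ∈ T, (j : ℝ)) = r * r.totient / 2 := by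
    rw [← Nat.cast_sum, eq_div_iff two_ne_zero, mul_comm]
    exact_mod_cast Nat.two_mul_sum_coprime_range hr1
  have hsum : ∑ j ∈ T, (π / d + π * j / r + π / 2 + if j * d < r then 0 else π) =
      r.totient * (π / d + π / 2) + π / r * ∑ j ∈ T, (j : ℝ) + N * π := by
    simp only [N, sum_add_distrib, sum_const, sum_ite, nsmul_eq_mul, mul_sum, div_mul_eq_mul_div]
    rw [Nat.totient_eq_card_coprime]
    ring
  rw [hsum, hgauss, Real.Angle.angle_eq_iff_two_pi_dvd_sub]
  refine ⟨N, ?_⟩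
  have hr' : (r : ℝ) ≠ 0 := by positivity
  have hPN' : (phiD d r : ℝ) = r.totient - N := by
    rw [eq_sub_iff_add_eq]; exact_mod_cast hPN
  push_cast
  rw [hPN']
  field_simp
  ring

theorem coe_arg_aeval_cyclotomic {d r : ℕ} (hd : 2 ≤ d) (hr : 0 < r) (hrd : r ≠ d) :
    aeval (exp (2 * π * I / d)) (cyclotomic r ℚ) ≠ 0 ∧
    (arg (aeval (exp (2 * π * I / d)) (cyclotomic r ℚ)) : Angle) =
      ↑(((r.totient + d * phiD d r : ℚ) : ℝ) * π / d) := by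
  have hfactor (j : ℕ) (hj : j ∈ {j ∈ range r | r.Coprime j}) :=
    coe_arg_exp_two_pi_I_div_sub hd (mem_range.mp (mem_filter.mp hj).1)
      (Nat.mul_ne_of_coprime (mem_filter.mp hj).2 hrd)
  rw [aeval_def, eval₂_eq_eval_map, map_cyclotomic, eval_cyclotomic_eq_prod hr.ne',
    ← coe_sum_root_angles hd hr hrd]
  refine ⟨prod_ne_zero_iff.mpr fun j hj => (hfactor j hj).1, ?_⟩
  rw [coe_arg_prod fun j hj => (hfactor j hj).1, sum_congr rfl fun j hj => (hfactor j hj).2,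
    ← Real.Angle.coe_coeHom, map_sum]

theorem prod_map_cyclotomic_ne_zero (L : Multiset ℕ) :
    (L.map fun r => cyclotomic r ℚ).prod ≠ 0 :=
  Multiset.prod_ne_zero (by simp [cyclotomic_ne_zero])

theorem cycProduct_ne_zero {c : ℚ} (hc : c ≠ 0) (a : ℕ) (L : Multiset ℕ) :
    C c * X ^ a * (L.map fun r => cyclotomic r ℚ).prod ≠ 0 :=
  mul_ne_zero (mul_ne_zero (C_ne_zero.mpr hc) (pow_ne_zero _ X_ne_zero))
    (prod_map_cyclotomic_ne_zero L)

open UniqueFactorizationMonoid in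
theorem normalizedFactors_cycProduct {c : ℚ} (hc : c ≠ 0) (a : ℕ) {L : Multiset ℕ}
    (hL : ∀ r ∈ L, 0 < r) :
    normalizedFactors (C c * X ^ a * (L.map fun r => cyclotomic r ℚ).prod) =
      Multiset.replicate a X + L.map fun r => cyclotomic r ℚ := by
  have hnormalize (r : ℕ) (hr : r ∈ L) :
      normalizedFactors (cyclotomic r ℚ) = {cyclotomic r ℚ} := by
    rw [normalizedFactors_irreducible (cyclotomic.irreducible_rat (hL r hr)),
      (cyclotomic.monic r ℚ).normalize_eq_self]
  rw [normalizedFactors_mul (mul_ne_zero (C_ne_zero.mpr hc) (pow_ne_zero _ X_ne_zero))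
      (prod_map_cyclotomic_ne_zero L),
    normalizedFactors_mul (C_ne_zero.mpr hc) (pow_ne_zero _ X_ne_zero),
    normalizedFactors_of_isUnit (isUnit_C.mpr hc.isUnit), zero_add,
    irreducible_X.normalizedFactors_pow, monic_X.normalize_eq_self,
    normalizedFactors_multiset_prod _ (by simp [cyclotomic_ne_zero]), Multiset.map_map,
    Function.comp_def, Multiset.map_congr rfl hnormalize]
  exact congrArg _ (Multiset.bind_singleton L _)

theorem cyclotomic_ne_X {r : ℕ} (hr : 0 < r) : cyclotomic r ℚ ≠ X := fun h => by
  have hroot : IsRoot (cyclotomic r ℚ) 0 := by simp [h]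
  exact (isRoot_cyclotomic_iff_charZero hr |>.mp hroot).ne_zero hr.ne' rfl

open UniqueFactorizationMonoid in
theorem Bd_cycProduct {d : ℕ} {c : ℚ} (hc : c ≠ 0) (a : ℕ) {L : Multiset ℕ}
    (hL : ∀ r ∈ L, 0 < r) :
    Bd d (C c * X ^ a * (L.map fun r => cyclotomic r ℚ).prod) =
      2 * a + (L.map fun r => (r.totient + d * phiD d r : ℚ)).sum := by
  set f := C c * X ^ a * (L.map fun r => cyclotomic r ℚ).prod
  have hf : f ≠ 0 := cycProduct_ne_zero hc a L
  have hmultX : multiplicity X f = a := by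
    rw [multiplicity_eq_count_normalizedFactors irreducible_X hf,
      normalizedFactors_cycProduct hc a hL,
      monic_X.normalize_eq_self, Multiset.count_add, Multiset.count_replicate_self,
      Multiset.count_eq_zero.mpr, add_zero]
    simpa using fun r hr => cyclotomic_ne_X (hL r hr)
  have hmult : ∀ r, 0 < r → multiplicity (cyclotomic r ℚ) f = L.count r := fun r hr => by
    rw [multiplicity_eq_count_normalizedFactors (cyclotomic.irreducible_rat hr) hf,
      normalizedFactors_cycProduct hc a hL, (cyclotomic.monic r ℚ).normalize_eq_self,
      Multiset.count_add, Multiset.count_replicate, if_neg (cyclotomic_ne_X hr).symm, zero_add,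
      Multiset.count_map_eq_count' _ _ cyclotomic_injective]
  have hsupport : L.toFinset ⊆ Icc 1 (2 * f.natDegree ^ 2 + 1) := by
    intro r hr
    rw [Multiset.mem_toFinset] at hr
    have hdeg : r.totient ≤ f.natDegree := by
      rw [← natDegree_cyclotomic r ℚ]
      exact natDegree_le_of_dvd ((Multiset.dvd_prod (Multiset.mem_map_of_mem _ hr)).mul_left _) hf
    have := r.le_two_mul_totient_sq
    have := Nat.pow_le_pow_left hdeg 2
    exact mem_Icc.mpr ⟨hL r hr, by omega⟩
  rw [Bd, hmultX, sum_multiset_map_count, sum_subset hsupport]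
  · congr 1
    refine sum_congr rfl fun r hr => ?_
    rw [hmult r (mem_Icc.mp hr).1, nsmul_eq_mul]
  · intro r _ hr
    rw [Multiset.count_eq_zero.mpr (mt Multiset.mem_toFinset.mpr hr), zero_smul]

theorem coe_arg_aeval_prod_cyclotomic {d : ℕ} (hd : 2 ≤ d) {L : Multiset ℕ}
    (hL : ∀ r ∈ L, 0 < r) (hdL : d ∉ L) :
    aeval (exp (2 * π * I / d)) (L.map fun r => cyclotomic r ℚ).prod ≠ 0 ∧
    (arg (aeval (exp (2 * π * I / d)) (L.map fun r => cyclotomic r ℚ).prod) : Angle) =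
      ↑(((L.map fun r => (r.totient + d * phiD d r : ℚ)).sum : ℝ) * π / d) := by
  induction L using Multiset.induction_on with
  | empty => simp
  | cons r L ih =>
    simp only [Multiset.mem_cons, forall_eq_or_imp, not_or] at hL hdL
    obtain ⟨hne, harg⟩ := ih hL.2 hdL.2
    obtain ⟨hne_r, harg_r⟩ := coe_arg_aeval_cyclotomic hd hL.1 (Ne.symm hdL.1)
    rw [Multiset.map_cons, Multiset.prod_cons, map_mul]
    refine ⟨mul_ne_zero hne_r hne, ?_⟩
    rw [arg_mul_coe_angle hne_r hne, harg_r, harg, ← Real.Angle.coe_add, Multiset.map_cons,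
      Multiset.sum_cons]
    congr 1
    push_cast
    ring

theorem coe_arg_aeval_cycProduct {d : ℕ} (hd : 2 ≤ d) {c : ℚ} (hc : 0 < c) (a : ℕ)
    {L : Multiset ℕ} (hL : ∀ r ∈ L, 0 < r) (hdL : d ∉ L) :
    aeval (exp (2 * π * I / d)) (C c * X ^ a * (L.map fun r => cyclotomic r ℚ).prod) ≠ 0 ∧
    (arg (aeval (exp (2 * π * I / d)) (C c * X ^ a * (L.map fun r => cyclotomic r ℚ).prod)) :
      Angle) =
      ↑(((2 * a + (L.map fun r => (r.totient + d * phiD d r : ℚ)).sum : ℚ) : ℝ) * π / d) := by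
  obtain ⟨hne, harg⟩ := coe_arg_aeval_prod_cyclotomic hd hL hdL
  have hζ : exp (2 * π * I / d) = exp (↑(2 * π / d) * I) :=
    congrArg Complex.exp (by push_cast; ring)
  have hc' : ((c : ℝ) : ℂ) ≠ 0 := by exact_mod_cast hc.ne'
  have hpow : exp (2 * π * I / d) ^ a ≠ 0 := pow_ne_zero _ (exp_ne_zero _)
  rw [map_mul, map_mul, aeval_C, map_pow, aeval_X, eq_ratCast, ← Complex.ofReal_ratCast]
  refine ⟨mul_ne_zero (mul_ne_zero hc' hpow) hne, ?_⟩
  rw [arg_mul_coe_angle (mul_ne_zero hc' hpow) hne, arg_mul_coe_angle hc' hpow,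
    arg_ofReal_of_nonneg (by positivity), arg_pow_coe_angle, harg, hζ,
    arg_exp_mul_I, Real.Angle.coe_toIocMod, ← Real.Angle.coe_nsmul, ← Real.Angle.coe_add,
    ← Real.Angle.coe_add]
  congr 1
  push_cast
  ring

/-- Let `d ≥ 2` and `ζ = exp(2πi/d)`. Let `f ∈ ℚ[q]` be a nonzero polynomial which is a
product of a positive rational constant, a power of `q`, and cyclotomic polynomials, such
that `Φ_d` does not divide `f`. Then `f(ζ) ≠ 0` and the complex argument of `f(ζ)` is
congruent to `B_d(f)·π/d` modulo `2π`. -/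
theorem arg_cycProduct_at_zeta (d : ℕ) (hd : 2 ≤ d) (f : Polynomial ℚ)
    (hf : IsPosCycProduct f) (hfd : ¬ cyclotomic d ℚ ∣ f) :
    aeval (Complex.exp (2 * Real.pi * Complex.I / d)) f ≠ 0 ∧
    ∃ k : ℤ,
      Complex.arg (aeval (Complex.exp (2 * Real.pi * Complex.I / d)) f)
        = (Bd d f : ℝ) * Real.pi / d + 2 * Real.pi * k := by
  obtain ⟨c, a, L, hc, hL, rfl⟩ := hf
  have hdL : d ∉ L := fun hdL =>
    hfd ((Multiset.dvd_prod (Multiset.mem_map_of_mem _ hdL)).mul_left _)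
  obtain ⟨hne, harg⟩ := coe_arg_aeval_cycProduct hd hc a hL hdL
  rw [← Bd_cycProduct hc.ne' a hL] at harg
  obtain ⟨k, hk⟩ := Real.Angle.angle_eq_iff_two_pi_dvd_sub.mp harg
  exact ⟨hne, k, by linarith⟩
end

section
/- Let i, j ≥ 0 be integers and d ≥ 2 an integer. Then: B_d(q^{i+d} − q^j) − B_d(q^i − q^j) equals 2d if i − j > 0, equals d if −d < i − j < 0, and equals 0 if i − j < −d. Also B_d(q^{i+d} + q^j) − B_d(q^i + q^j) equals 2d if i − j > −d/2, equals d if i − j = −d/2, and equals 0 if i − j < −d/2. -/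
/-!
Both `q^a - q^b` and `q^a + q^b` are `q^min(a,b)` times a product of distinct cyclotomic
polynomials: `q^n - 1 = ∏_{r ∣ n} Φ_r` and `q^n + 1 = ∏_{r ∣ 2n, r ∤ n} Φ_r`. Grouping the
fractions `m / n` with `1 ≤ m ≤ n / d` by their reduced denominator gives
`∑_{r ∣ n} φ_d(r) = 1/2 + ⌊n/d⌋`, and with `∑_{r ∣ n} φ(r) = n` this yields
`B_d(q^a - q^b) = a + b + d/2 + d⌊|a-b|/d⌋` and
`B_d(q^a + q^b) = a + b + d(⌊2|a-b|/d⌋ - ⌊|a-b|/d⌋)`. Each difference in the theorem is then `d`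
plus `d` times the change of a floor quotient when `|i - j|` becomes `|i - j + d|`.
-/

open Polynomial

open Finset
open scoped Nat

namespace Nat

theorem card_filter_Icc_gcd_mul_eq (d : ℕ) {g : ℕ} (hg : 0 < g) (r : ℕ) :
    #{m ∈ Icc 1 (g * r / d) | (g * r).gcd m = g} = #{j ∈ Icc 1 (r / d) | j.gcd r = 1} := by
  rcases d.eq_zero_or_pos with rfl | hd
  · simp
  symm
  refine card_bij (fun j _ => g * j) ?_ (fun _ _ _ _ h => Nat.eq_of_mul_eq_mul_left hg h) ?_
  · simp only [mem_filter, mem_Icc, and_imp]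
    intro j hj1 hjr hcop
    refine ⟨⟨Nat.one_le_iff_ne_zero.mpr (by positivity), ?_⟩, ?_⟩
    · rw [Nat.le_div_iff_mul_le hd, mul_assoc]
      exact Nat.mul_le_mul_left g ((Nat.le_div_iff_mul_le hd).mp hjr)
    · rw [Nat.gcd_mul_left, Nat.gcd_comm, hcop, mul_one]
  · simp only [mem_filter, mem_Icc, exists_prop, and_imp]
    intro m hm1 hmr hgcd
    obtain ⟨q, rfl⟩ : g ∣ m := hgcd ▸ Nat.gcd_dvd_right _ _
    rw [Nat.gcd_mul_left, mul_eq_left₀ hg.ne'] at hgcd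
    refine ⟨q, ⟨⟨Nat.pos_of_mul_pos_left hm1, ?_⟩, by rwa [Nat.gcd_comm]⟩, rfl⟩
    rw [Nat.le_div_iff_mul_le hd, mul_assoc] at hmr
    exact (Nat.le_div_iff_mul_le hd).mpr (Nat.le_of_mul_le_mul_left hmr hg)

theorem sum_divisors_card_filter_Icc_coprime (d n : ℕ) :
    ∑ r ∈ n.divisors, #{j ∈ Icc 1 (r / d) | j.gcd r = 1} = n / d := by
  rcases n.eq_zero_or_pos with rfl | hn
  · simp
  have hfib : #(Icc 1 (n / d)) = ∑ g ∈ n.divisors, #{m ∈ Icc 1 (n / d) | n.gcd m = g} :=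
    card_eq_sum_card_fiberwise fun m _ => mem_divisors.mpr ⟨Nat.gcd_dvd_left n m, hn.ne'⟩
  rw [Nat.card_Icc, Nat.add_sub_cancel] at hfib
  rw [hfib, ← Nat.sum_div_divisors]
  refine sum_congr rfl fun g hg => ?_
  obtain ⟨r, rfl⟩ := Nat.dvd_of_mem_divisors hg
  have hg0 : 0 < g := Nat.pos_of_mul_pos_right hn
  rw [Nat.mul_div_cancel_left r hg0, card_filter_Icc_gcd_mul_eq d hg0]

end Nat

theorem phiD_eq_card_add_ite {d : ℕ} (hd : 2 ≤ d) (r : ℕ) :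
    phiD d r = #{j ∈ Icc 1 (r / d) | j.gcd r = 1} + if r = 1 then 1 / 2 else 0 := by
  unfold phiD
  split_ifs with hr
  · simp [hr, Nat.div_eq_of_lt (show 1 < d by omega)]
  · simp

theorem sum_divisors_totient_add_mul_phiD {d n : ℕ} (hd : 2 ≤ d) (hn : n ≠ 0) :
    ∑ r ∈ n.divisors, ((φ r : ℚ) + d * phiD d r) = n + d * (1 / 2 + (n / d : ℕ)) := by
  simp only [sum_add_distrib, ← mul_sum, phiD_eq_card_add_ite hd]
  rw [sum_ite_eq' _ 1, if_pos (Nat.one_mem_divisors.mpr hn), ← Nat.cast_sum, ← Nat.cast_sum,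
    Nat.sum_totient, Nat.sum_divisors_card_filter_Icc_coprime d n]
  ring

namespace Polynomial

theorem not_X_dvd_cyclotomic (R : Type*) [CommRing R] [Nontrivial R] (r : ℕ) :
    ¬ X ∣ cyclotomic r R := by
  rw [X_dvd_iff]
  rcases Nat.lt_trichotomy r 1 with hr | rfl | hr
  · simp [Nat.lt_one_iff.mp hr]
  · simp
  · simp [cyclotomic_coeff_zero R hr]

theorem cyclotomic_dvd_prod_cyclotomic_iff {r : ℕ} (hr : 0 < r) (S : Finset ℕ) :
    cyclotomic r ℚ ∣ ∏ s ∈ S, cyclotomic s ℚ ↔ r ∈ S := by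
  refine ⟨fun h => ?_, fun h => dvd_prod_of_mem _ h⟩
  obtain ⟨s, hs, hrs⟩ := ((cyclotomic.irreducible_rat hr).prime.dvd_finsetProd_iff _).mp h
  by_contra hrS
  have hne : r ≠ s := fun h => hrS (h ▸ hs)
  exact (cyclotomic.irreducible_rat hr).not_isUnit
    ((cyclotomic.isCoprime_rat hne).isUnit_of_dvd' dvd_rfl hrs)

theorem multiplicity_cyclotomic_prod_cyclotomic {r : ℕ} (hr : 0 < r) (S : Finset ℕ) :
    multiplicity (cyclotomic r ℚ) (∏ s ∈ S, cyclotomic s ℚ) = if r ∈ S then 1 else 0 := by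
  have hprime := (cyclotomic.irreducible_rat hr).prime
  split_ifs with h
  · have hrest : ¬ cyclotomic r ℚ ∣ ∏ s ∈ S.erase r, cyclotomic s ℚ := by
      rw [cyclotomic_dvd_prod_cyclotomic_iff hr]
      exact S.notMem_erase r
    rw [← mul_prod_erase S _ h, multiplicity_mul hprime
      (.of_not_isUnit hprime.not_isUnit (mul_ne_zero (cyclotomic_ne_zero r ℚ)
        (prod_ne_zero_iff.mpr fun s _ => cyclotomic_ne_zero s ℚ))),
      multiplicity_self, multiplicity_eq_zero.mpr hrest]
  · rw [multiplicity_eq_zero, cyclotomic_dvd_prod_cyclotomic_iff hr]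
    exact h

theorem X_pow_add_one_eq_prod_cyclotomic (R : Type*) [CommRing R] [IsDomain R] {n : ℕ}
    (hn : 0 < n) : (X ^ n + 1 : R[X]) = ∏ s ∈ (2 * n).divisors \ n.divisors, cyclotomic s R := by
  refine mul_left_cancel₀ (X_pow_sub_C_ne_zero hn (1 : R)) ?_
  rw [C_1, X_pow_sub_one_mul_prod_cyclotomic_eq_X_pow_sub_one_of_dvd R (Dvd.intro_left 2 rfl)
    (by omega), two_mul, pow_add]
  ring

end Polynomial

theorem Bd_C_mul (d : ℕ) {c : ℚ} (hc : c ≠ 0) (f : ℚ[X]) : Bd d (C c * f) = Bd d f := by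
  have hassoc : Associated (C c * f) f := associated_unit_mul_left f _ (isUnit_C.mpr hc.isUnit)
  simp only [Bd, natDegree_C_mul hc, multiplicity_eq_of_associated_right hassoc]

theorem Bd_neg (d : ℕ) (f : ℚ[X]) : Bd d (-f) = Bd d f := by
  rw [neg_eq_neg_one_mul, ← C_1, ← C_neg, Bd_C_mul d (by norm_num)]

theorem Bd_eq_of_eq_X_pow_mul_prod_cyclotomic (d : ℕ) {f : ℚ[X]} {b : ℕ} {S : Finset ℕ}
    (hf : f = X ^ b * ∏ s ∈ S, cyclotomic s ℚ) (hS : S ⊆ Icc 1 (2 * f.natDegree ^ 2 + 1)) :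
    Bd d f = 2 * b + ∑ s ∈ S, ((φ s : ℚ) + d * phiD d s) := by
  have hP : ∏ s ∈ S, cyclotomic s ℚ ≠ 0 := prod_ne_zero_iff.mpr fun s _ => cyclotomic_ne_zero s ℚ
  have hX : multiplicity X f = b := by
    refine hf ▸ multiplicity_eq_of_dvd_of_not_dvd (dvd_mul_right _ _) fun h => ?_
    rw [pow_succ, mul_dvd_mul_iff_left (pow_ne_zero b X_ne_zero),
      prime_X.dvd_finsetProd_iff] at h
    obtain ⟨s, -, hs⟩ := h
    exact not_X_dvd_cyclotomic ℚ s hs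
  have hcyc : ∀ r ∈ Icc 1 (2 * f.natDegree ^ 2 + 1),
      multiplicity (cyclotomic r ℚ) f = if r ∈ S then 1 else 0 := by
    intro r hr
    have hr0 : 0 < r := (mem_Icc.mp hr).1
    have hirr := cyclotomic.irreducible_rat hr0
    have hXb : ¬ cyclotomic r ℚ ∣ X ^ b := fun h =>
      not_X_dvd_cyclotomic ℚ r (hirr.dvd_symm irreducible_X (hirr.prime.dvd_of_dvd_pow h))
    rw [hf, multiplicity_mul hirr.prime (.of_not_isUnit hirr.not_isUnit
      (mul_ne_zero (pow_ne_zero b X_ne_zero) hP)), multiplicity_eq_zero.mpr hXb, zero_add,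
      multiplicity_cyclotomic_prod_cyclotomic hr0]
  rw [Bd, hX, sum_congr rfl fun r hr => by rw [hcyc r hr]]
  simp only [Nat.cast_ite, Nat.cast_one, Nat.cast_zero, ite_mul, one_mul, zero_mul,
    sum_ite_mem, inter_eq_right.mpr hS]

theorem divisors_subset_Icc_of_le_two_mul {n m : ℕ} (hn : n ≤ 2 * m) :
    n.divisors ⊆ Icc 1 (2 * m ^ 2 + 1) := fun s hs => by
  have hs' := Nat.divisor_le hs
  have := Nat.le_self_pow two_ne_zero m
  simp only [mem_Icc]
  exact ⟨Nat.pos_of_mem_divisors hs, by omega⟩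

theorem Bd_X_pow (d b : ℕ) : Bd d (X ^ b) = 2 * b := by
  rw [Bd_eq_of_eq_X_pow_mul_prod_cyclotomic d (b := b) (S := ∅) (by simp) (empty_subset _)]
  simp

theorem Bd_X_pow_add_sub_X_pow {d : ℕ} (hd : 2 ≤ d) (b : ℕ) {n : ℕ} (hn : 0 < n) :
    Bd d (X ^ (b + n) - X ^ b) = 2 * b + n + d * (1 / 2 + (n / d : ℕ)) := by
  have hdeg : (X ^ (b + n) - X ^ b : ℚ[X]).natDegree = b + n := by
    rw [natDegree_sub_eq_left_of_natDegree_lt] <;> simp [hn]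
  rw [Bd_eq_of_eq_X_pow_mul_prod_cyclotomic d (b := b) (S := n.divisors)
      (by rw [prod_cyclotomic_eq_X_pow_sub_one hn]; ring)
      (by rw [hdeg]; exact divisors_subset_Icc_of_le_two_mul (by omega)),
    sum_divisors_totient_add_mul_phiD hd hn.ne']
  ring

theorem Bd_X_pow_add_add_X_pow {d : ℕ} (hd : 2 ≤ d) (b : ℕ) {n : ℕ} (hn : 0 < n) :
    Bd d (X ^ (b + n) + X ^ b) = 2 * b + n + d * (((2 * n) / d : ℕ) - (n / d : ℕ)) := by
  have hdeg : (X ^ (b + n) + X ^ b : ℚ[X]).natDegree = b + n := by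
    rw [natDegree_add_eq_left_of_natDegree_lt] <;> simp [hn]
  rw [Bd_eq_of_eq_X_pow_mul_prod_cyclotomic d (b := b) (S := (2 * n).divisors \ n.divisors)
      (by rw [← X_pow_add_one_eq_prod_cyclotomic ℚ hn]; ring)
      (by rw [hdeg]; exact sdiff_subset.trans (divisors_subset_Icc_of_le_two_mul (by omega))),
    sum_sdiff_eq_sub (Nat.divisors_subset_of_dvd (by omega) (Dvd.intro_left 2 rfl)),
    sum_divisors_totient_add_mul_phiD hd (by omega), sum_divisors_totient_add_mul_phiD hd hn.ne']
  push_cast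
  ring

theorem Bd_X_pow_sub_X_pow {d : ℕ} (hd : 2 ≤ d) {a b : ℕ} (hab : a ≠ b) :
    Bd d (X ^ a - X ^ b) = a + b + d / 2 + d * ((|(a : ℤ) - b| / d : ℤ) : ℚ) := by
  wlog hba : b < a generalizing a b
  · rw [← neg_sub, Bd_neg, this hab.symm (by omega), abs_sub_comm]
    ring
  obtain ⟨n, hn, rfl⟩ : ∃ n, 0 < n ∧ a = b + n := ⟨a - b, by omega, by omega⟩
  rw [Bd_X_pow_add_sub_X_pow hd b hn, show |((b + n : ℕ) : ℤ) - b| = n by simp,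
    ← Int.natCast_div, Int.cast_natCast]
  push_cast
  ring

theorem Bd_X_pow_add_X_pow {d : ℕ} (hd : 2 ≤ d) (a b : ℕ) :
    Bd d (X ^ a + X ^ b) =
      a + b + d * ((2 * |(a : ℤ) - b| / d - |(a : ℤ) - b| / d : ℤ) : ℚ) := by
  wlog hba : b ≤ a generalizing a b
  · rw [add_comm, this b a (by omega), abs_sub_comm]
    ring
  obtain ⟨n, rfl⟩ := Nat.exists_eq_add_of_le hba
  rcases n.eq_zero_or_pos with rfl | hn
  · rw [add_zero, ← two_mul, ← C_ofNat, Bd_C_mul d two_ne_zero, Bd_X_pow]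
    simp
    ring
  rw [Bd_X_pow_add_add_X_pow hd b hn, show |((b + n : ℕ) : ℤ) - b| = n by simp,
    show 2 * (n : ℤ) = (2 * n : ℕ) by push_cast; rfl, ← Int.natCast_div, ← Int.natCast_div,
    Int.cast_sub, Int.cast_natCast, Int.cast_natCast]
  push_cast
  ring

namespace Int

variable {d t : ℤ}

theorem abs_add_ediv_sub_abs_ediv_of_nonneg (hd : 0 < d) (ht : 0 ≤ t) :
    |t + d| / d - |t| / d = 1 := by
  rw [abs_of_nonneg ht, abs_of_nonneg (by omega), Int.add_ediv_of_dvd_right dvd_rfl,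
    Int.ediv_self hd.ne']
  ring

theorem abs_add_ediv_sub_abs_ediv_of_neg_of_lt (ht₁ : -d < t) (ht₂ : t < 0) :
    |t + d| / d - |t| / d = 0 := by
  rw [abs_of_pos (by omega), abs_of_neg ht₂, Int.ediv_eq_zero_of_lt (by omega) (by omega),
    Int.ediv_eq_zero_of_lt (by omega) (by omega), sub_zero]

theorem abs_add_ediv_sub_abs_ediv_of_le_neg (hd : 0 < d) (ht : t ≤ -d) :
    |t + d| / d - |t| / d = -1 := by
  rw [abs_of_nonpos (by omega), abs_of_neg (by omega), show -t = -(t + d) + d by ring,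
    Int.add_ediv_of_dvd_right dvd_rfl, Int.ediv_self hd.ne']
  ring

theorem two_mul_add_ediv_sub_add_ediv (hd : d ≠ 0) (n : ℤ) :
    2 * (n + d) / d - (n + d) / d = 2 * n / d - n / d + 1 := by
  rw [show 2 * (n + d) = 2 * n + 2 * d by ring, Int.add_mul_ediv_right _ _ hd,
    Int.add_ediv_of_dvd_right dvd_rfl, Int.ediv_self hd]
  ring

theorem two_mul_ediv_sub_ediv_of_lt (hd : 0 < d) {n : ℤ} (hn₀ : 0 ≤ n) (hn : n < d) :
    2 * n / d - n / d = if d ≤ 2 * n then 1 else 0 := by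
  rw [Int.ediv_eq_zero_of_lt hn₀ hn, sub_zero]
  split_ifs with h
  · exact (Int.ediv_eq_iff_of_pos hd).mpr ⟨by omega, by omega⟩
  · exact Int.ediv_eq_zero_of_lt (by omega) (by omega)

/-- For `n ≥ 0`, `2n / d - n / d` counts the multiples of `d` in `(n, 2n]`. -/
theorem two_mul_abs_add_ediv_sub_two_mul_abs_ediv (hd : 0 < d) (t : ℤ) :
    (2 * |t + d| / d - |t + d| / d) - (2 * |t| / d - |t| / d) = (2 * t + d).sign := by
  rcases le_or_gt 0 t with ht | ht
  · rw [abs_of_nonneg ht, abs_of_nonneg (by omega), two_mul_add_ediv_sub_add_ediv hd.ne',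
      Int.sign_eq_one_of_pos (by omega)]
    ring
  rcases le_or_gt t (-d) with ht' | ht'
  · rw [abs_of_neg ht, abs_of_nonpos (by omega), show -t = -(t + d) + d by ring,
      two_mul_add_ediv_sub_add_ediv hd.ne', Int.sign_eq_neg_one_of_neg (by omega)]
    ring
  rw [abs_of_neg ht, abs_of_pos (by omega), two_mul_ediv_sub_ediv_of_lt hd (by omega) (by omega),
    two_mul_ediv_sub_ediv_of_lt hd (by omega) (by omega)]
  rcases lt_trichotomy (2 * t + d) 0 with h | h | h
  · rw [Int.sign_eq_neg_one_of_neg h]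
    split_ifs <;> omega
  · rw [h, Int.sign_zero]
    split_ifs <;> omega
  · rw [Int.sign_eq_one_of_pos h]
    split_ifs <;> omega

end Int

/-- Let `i, j ≥ 0` and `d ≥ 2` be integers. Then
`B_d(q^{i+d} − q^j) − B_d(q^i − q^j)` equals `2d` if `i − j > 0`, equals `d` if
`−d < i − j < 0`, and equals `0` if `i − j < −d`. Also
`B_d(q^{i+d} + q^j) − B_d(q^i + q^j)` equals `2d` if `i − j > −d/2`, equals `d` if
`i − j = −d/2`, and equals `0` if `i − j < −d/2`. -/
theorem Bd_hook_differences (d i j : ℕ) (hd : 2 ≤ d) :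
    (((0 : ℤ) < (i : ℤ) - j →
        Bd d (X ^ (i + d) - X ^ j) - Bd d (X ^ i - X ^ j) = 2 * d) ∧
      (-(d : ℤ) < (i : ℤ) - j → (i : ℤ) - j < 0 →
        Bd d (X ^ (i + d) - X ^ j) - Bd d (X ^ i - X ^ j) = d) ∧
      ((i : ℤ) - j < -(d : ℤ) →
        Bd d (X ^ (i + d) - X ^ j) - Bd d (X ^ i - X ^ j) = 0)) ∧
    ((-(d : ℤ) < 2 * ((i : ℤ) - j) →
        Bd d (X ^ (i + d) + X ^ j) - Bd d (X ^ i + X ^ j) = 2 * d) ∧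
      (2 * ((i : ℤ) - j) = -(d : ℤ) →
        Bd d (X ^ (i + d) + X ^ j) - Bd d (X ^ i + X ^ j) = d) ∧
      (2 * ((i : ℤ) - j) < -(d : ℤ) →
        Bd d (X ^ (i + d) + X ^ j) - Bd d (X ^ i + X ^ j) = 0)) := by
  have hd₀ : (0 : ℤ) < d := by omega
  have hshift : ((i + d : ℕ) : ℤ) - j = (i - j) + d := by push_cast; ring
  have hsub (h₁ : i + d ≠ j) (h₂ : i ≠ j) :
      Bd d (X ^ (i + d) - X ^ j) - Bd d (X ^ i - X ^ j) =
        d + d * ((|((i : ℤ) - j) + d| / d - |(i : ℤ) - j| / d : ℤ) : ℚ) := by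
    rw [Bd_X_pow_sub_X_pow hd h₁, Bd_X_pow_sub_X_pow hd h₂, hshift]
    push_cast
    ring
  have hadd : Bd d (X ^ (i + d) + X ^ j) - Bd d (X ^ i + X ^ j) =
      d + d * ((2 * ((i : ℤ) - j) + d).sign : ℚ) := by
    rw [Bd_X_pow_add_X_pow hd, Bd_X_pow_add_X_pow hd, hshift,
      ← Int.two_mul_abs_add_ediv_sub_two_mul_abs_ediv hd₀]
    push_cast
    ring
  refine ⟨⟨fun h => ?_, fun h₁ h₂ => ?_, fun h => ?_⟩, fun h => ?_, fun h => ?_, fun h => ?_⟩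
  · rw [hsub (by omega) (by omega), Int.abs_add_ediv_sub_abs_ediv_of_nonneg hd₀ h.le]
    push_cast
    ring
  · rw [hsub (by omega) (by omega), Int.abs_add_ediv_sub_abs_ediv_of_neg_of_lt h₁ h₂]
    simp
  · rw [hsub (by omega) (by omega), Int.abs_add_ediv_sub_abs_ediv_of_le_neg hd₀ h.le]
    push_cast
    ring
  · rw [hadd, Int.sign_eq_one_of_pos (by omega)]
    push_cast
    ring
  · rw [hadd, h, neg_add_cancel, Int.sign_zero]
    simp
  · rw [hadd, Int.sign_eq_neg_one_of_neg (by omega)]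
    push_cast
    ring
end
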